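/- For all graphs G1, G2 and every positive integer k, α_k(G1 × G2) ≥ α_k(G1) · α_k(G2). -/

import Mathlib

open SimpleGraph

/-- The `k`-independence number: the maximum size of a set of vertices at pairwise
distance greater than `k`. -/
noncomputable def kIndepNum {V : Type*} [Fintype V] (G : SimpleGraph V) (k : ℕ) : ℕ :=
  sSup {n | ∃ s : Finset V, s.card = n ∧ ∀ u ∈ s, ∀ v ∈ s, u ≠ v → (k : ℕ∞) < G.edist u v}

/-- The tensor (direct / categorical) product of two simple graphs. -/
def tensorProd {V1 V2 : Type*} (G1 : SimpleGraph V1) (G2 : SimpleGraph V2) :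
    SimpleGraph (V1 × V2) where
  Adj a b := G1.Adj a.1 b.1 ∧ G2.Adj a.2 b.2
  symm := by constructor; intro a b ⟨h1, h2⟩; exact ⟨G1.adj_symm h1, G2.adj_symm h2⟩
  loopless := by constructor; intro a ⟨h1, _⟩; exact G1.irrefl h1

/-! The product `s1 ×ˢ s2` of `k`-independent sets is `k`-independent in `G1 × G2`: two distinct
pairs differ in some coordinate, and the coordinate projections are graph homomorphisms, which
do not increase distances. -/

theorem SimpleGraph.Hom.edist_le {V W : Type*} {G : SimpleGraph V} {H : SimpleGraph W}
    (f : G →g H) (u v : V) : H.edist (f u) (f v) ≤ G.edist u v := by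
  refine le_sInf ?_
  rintro _ ⟨p, rfl⟩
  simpa using H.edist_le (p.map f)

section tensorProd

variable {V1 V2 : Type*} (G1 : SimpleGraph V1) (G2 : SimpleGraph V2)

def tensorProd.fst : tensorProd G1 G2 →g G1 := ⟨Prod.fst, And.left⟩

def tensorProd.snd : tensorProd G1 G2 →g G2 := ⟨Prod.snd, And.right⟩

theorem edist_fst_le_edist_tensorProd (a b : V1 × V2) :
    G1.edist a.1 b.1 ≤ (tensorProd G1 G2).edist a b :=
  (tensorProd.fst G1 G2).edist_le a b

theorem edist_snd_le_edist_tensorProd (a b : V1 × V2) :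
    G2.edist a.2 b.2 ≤ (tensorProd G1 G2).edist a b :=
  (tensorProd.snd G1 G2).edist_le a b

end tensorProd

/-- The sets of vertices whose size `kIndepNum` maximises. -/
def IsKIndepSet {V : Type*} (G : SimpleGraph V) (k : ℕ) (s : Finset V) : Prop :=
  ∀ u ∈ s, ∀ v ∈ s, u ≠ v → (k : ℕ∞) < G.edist u v

theorem IsKIndepSet.product {V1 V2 : Type*} {G1 : SimpleGraph V1} {G2 : SimpleGraph V2} {k : ℕ}
    {s1 : Finset V1} {s2 : Finset V2} (h1 : IsKIndepSet G1 k s1) (h2 : IsKIndepSet G2 k s2) :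
    IsKIndepSet (tensorProd G1 G2) k (s1 ×ˢ s2) := by
  rintro u hu v hv huv
  rw [Finset.mem_product] at hu hv
  by_cases hfst : u.1 = v.1
  · have hsnd : u.2 ≠ v.2 := fun h => huv (Prod.ext hfst h)
    exact (h2 u.2 hu.2 v.2 hv.2 hsnd).trans_le (edist_snd_le_edist_tensorProd G1 G2 u v)
  · exact (h1 u.1 hu.1 v.1 hv.1 hfst).trans_le (edist_fst_le_edist_tensorProd G1 G2 u v)

section kIndepNum

variable {V : Type*} [Fintype V] (G : SimpleGraph V) (k : ℕ)

theorem bddAbove_card_isKIndepSet :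
    BddAbove {n | ∃ s : Finset V, s.card = n ∧ IsKIndepSet G k s} := by
  refine ⟨Fintype.card V, ?_⟩
  rintro _ ⟨s, rfl, -⟩
  exact s.card_le_univ

theorem IsKIndepSet.card_le_kIndepNum {G k} {s : Finset V} (hs : IsKIndepSet G k s) :
    s.card ≤ kIndepNum G k :=
  le_csSup (bddAbove_card_isKIndepSet G k) ⟨s, rfl, hs⟩

theorem exists_isKIndepSet_card_eq_kIndepNum :
    ∃ s : Finset V, s.card = kIndepNum G k ∧ IsKIndepSet G k s := by
  refine Nat.sSup_mem ?_ (bddAbove_card_isKIndepSet G k)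
  exact ⟨0, ∅, rfl, by simp [IsKIndepSet]⟩

end kIndepNum

theorem kIndepNum_tensorProd_ge_general {V1 V2 : Type*} [Fintype V1] [Fintype V2]
    (G1 : SimpleGraph V1) (G2 : SimpleGraph V2) (k : ℕ) :
    kIndepNum (tensorProd G1 G2) k ≥ kIndepNum G1 k * kIndepNum G2 k := by
  obtain ⟨s1, hcard1, hs1⟩ := exists_isKIndepSet_card_eq_kIndepNum G1 k
  obtain ⟨s2, hcard2, hs2⟩ := exists_isKIndepSet_card_eq_kIndepNum G2 k
  rw [← hcard1, ← hcard2, ← Finset.card_product]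
  exact (hs1.product hs2).card_le_kIndepNum

theorem kIndepNum_tensorProd_ge {V1 V2 : Type*} [Fintype V1] [Fintype V2]
    (G1 : SimpleGraph V1) (G2 : SimpleGraph V2) (k : ℕ) (hk : 0 < k) :
    kIndepNum (tensorProd G1 G2) k ≥ kIndepNum G1 k * kIndepNum G2 k :=
  kIndepNum_tensorProd_ge_general G1 G2 k
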